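/- arXiv:1107.1907 — 6 statements merged into one kernel-verified Lean document; each statement's English description precedes it below -/
import Mathlib

section
/- Let M be a commutative cancellative monoid and F ⊆ M a face (a submonoid such that a + b ∈ F implies a ∈ F and b ∈ F). If M is a toric monoid (i.e., finitely generated, torsion-free, injecting into and saturated in its Grothendieck group) and F is a face of M, then the induced map Fᵍᵖ → Mᵍᵖ on Grothendieck groups is injective and its image is a saturated subgroup, hence a direct summand of the free abelian group Mᵍᵖ. -/
/-!
Every element of the group generated by the face `F` is a difference `a - b` of elements of `F`.
If `n • x = a - b`, then `n • (x + b) = a + (n - 1) • b` lies in `F ⊆ M`, so `x + b ∈ M` by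
saturation of `M`; writing `n • (x + b) = (n - 1) • (x + b) + (x + b)` as a sum of two elements
of `M` lying in the face `F` gives `x + b ∈ F`, whence `x ∈ ⟨F⟩`. So `G ⧸ ⟨F⟩` is a finitely
generated torsion-free abelian group, hence free, hence projective, and `G → G ⧸ ⟨F⟩` splits.
-/

theorem AddSubgroup.exists_sub_of_mem_closure {G : Type*} [AddCommGroup G] {F : AddSubmonoid G}
    {x : G} (hx : x ∈ closure (F : Set G)) : ∃ a ∈ F, ∃ b ∈ F, x = a - b := by
  induction hx using closure_induction with
  | mem y hy => exact ⟨y, hy, 0, F.zero_mem, (sub_zero y).symm⟩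
  | zero => exact ⟨0, F.zero_mem, 0, F.zero_mem, (sub_zero 0).symm⟩
  | add y z _ _ ihy ihz =>
    obtain ⟨a, ha, b, hb, rfl⟩ := ihy
    obtain ⟨c, hc, d, hd, rfl⟩ := ihz
    exact ⟨a + c, F.add_mem ha hc, b + d, F.add_mem hb hd, by abel⟩
  | neg y _ ihy =>
    obtain ⟨a, ha, b, hb, rfl⟩ := ihy
    exact ⟨b, hb, a, ha, neg_sub a b⟩

theorem AddSubgroup.mem_closure_of_nsmul_mem_closure_of_face {G : Type*} [AddCommGroup G]
    {M F : AddSubmonoid G} (hMsat : ∀ (n : ℕ) (x : G), 0 < n → n • x ∈ M → x ∈ M) (hFM : F ≤ M)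
    (hface : ∀ a b : G, a ∈ M → b ∈ M → a + b ∈ F → a ∈ F ∧ b ∈ F)
    {n : ℕ} {x : G} (hn : 0 < n) (hx : n • x ∈ closure (F : Set G)) :
    x ∈ closure (F : Set G) := by
  obtain ⟨m, rfl⟩ : ∃ m, n = m + 1 := ⟨n - 1, by omega⟩
  obtain ⟨a, ha, b, hb, hab⟩ := exists_sub_of_mem_closure hx
  have hF : (m + 1) • (x + b) ∈ F := by
    have : (m + 1) • (x + b) = a + m • b := by rw [smul_add, hab, succ_nsmul]; abel
    exact this ▸ F.add_mem ha (F.nsmul_mem hb m)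
  have hM : x + b ∈ M := hMsat _ _ hn (hFM hF)
  have hxbF : x + b ∈ F :=
    (hface _ _ (M.nsmul_mem hM m) hM (succ_nsmul (x + b) m ▸ hF)).2
  simpa using sub_mem (subset_closure hxbF) (subset_closure hb)

theorem Submodule.isAddTorsionFree_quotient {R M : Type*} [Ring R] [AddCommGroup M] [Module R M]
    {p : Submodule R M} (hsat : ∀ (n : ℕ) (x : M), 0 < n → n • x ∈ p → x ∈ p) :
    IsAddTorsionFree (M ⧸ p) := by
  refine ⟨fun n hn a b hab => ?_⟩
  induction a using Submodule.Quotient.induction_on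
  induction b using Submodule.Quotient.induction_on
  simp only [← Submodule.Quotient.mk_smul, Submodule.Quotient.eq, ← smul_sub] at hab
  exact (Submodule.Quotient.eq p).2 (hsat n _ (Nat.pos_of_ne_zero hn) hab)

theorem Submodule.exists_isCompl_of_projective_quotient {R M : Type*} [Ring R] [AddCommGroup M]
    [Module R M] (p : Submodule R M) [Module.Projective R (M ⧸ p)] :
    ∃ q : Submodule R M, IsCompl p q := by
  obtain ⟨s, hs⟩ := Module.projective_lifting_property p.mkQ LinearMap.id p.mkQ_surjective
  have hidem : IsIdempotentElem (s ∘ₗ p.mkQ) :=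
    LinearMap.ext fun x => congr(s $(LinearMap.congr_fun hs (p.mkQ x)))
  have hker : LinearMap.ker (s ∘ₗ p.mkQ) = p := by
    rw [LinearMap.ker_comp_of_ker_eq_bot _ (LinearMap.ker_eq_bot_of_inverse hs), ker_mkQ]
  exact ⟨_, hker ▸ (LinearMap.IsIdempotentElem.isCompl hidem).symm⟩

theorem AddSubgroup.exists_isCompl_of_saturated {G : Type*} [AddCommGroup G] [Module.Finite ℤ G]
    (H : AddSubgroup G) (hsat : ∀ (n : ℕ) (x : G), 0 < n → n • x ∈ H → x ∈ H) :
    ∃ K : AddSubgroup G, IsCompl H K := by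
  have := Submodule.isAddTorsionFree_quotient (p := H.toIntSubmodule) hsat
  obtain ⟨q, hq⟩ := H.toIntSubmodule.exists_isCompl_of_projective_quotient
  exact ⟨q.toAddSubgroup, by simpa using AddSubgroup.toIntSubmodule.symm.isCompl hq⟩

theorem stmt_1_general {G : Type} [AddCommGroup G] [Module.Finite ℤ G]
    (M : AddSubmonoid G)
    (hMsat : ∀ (n : ℕ) (x : G), 0 < n → n • x ∈ M → x ∈ M)
    (F : AddSubmonoid G) (hFM : F ≤ M)
    (hface : ∀ a b : G, a ∈ M → b ∈ M → a + b ∈ F → a ∈ F ∧ b ∈ F) :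
    -- the subgroup generated by `F` is saturated in `G = Mᵍᵖ` ...
    (∀ (n : ℕ) (x : G), 0 < n → n • x ∈ AddSubgroup.closure (F : Set G) →
      x ∈ AddSubgroup.closure (F : Set G)) ∧
    -- ... hence a direct summand
    ∃ K : AddSubgroup G, IsCompl (AddSubgroup.closure (F : Set G)) K := by
  have hsat : ∀ (n : ℕ) (x : G), 0 < n → n • x ∈ AddSubgroup.closure (F : Set G) →
      x ∈ AddSubgroup.closure (F : Set G) := fun _ _ hn hx =>
    AddSubgroup.mem_closure_of_nsmul_mem_closure_of_face hMsat hFM hface hn hx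
  exact ⟨hsat, AddSubgroup.exists_isCompl_of_saturated _ hsat⟩

/-- Let `M` be a toric monoid, realized as a submonoid of its Grothendieck group `G = Mᵍᵖ`
(a finitely generated free abelian group which `M` generates), with `M` finitely
generated and saturated in `G`.  If `F` is a face of `M`, then `Fᵍᵖ → Mᵍᵖ` is injective
(here `Fᵍᵖ` is realized as the subgroup of `G` generated by `F`, so the map is the
inclusion) with saturated image, hence a direct summand of the free abelian group `G`. -/
theorem stmt_1 {G : Type} [AddCommGroup G] [Module.Free ℤ G] [Module.Finite ℤ G]
    (M : AddSubmonoid G)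
    (hMgen : AddSubgroup.closure (M : Set G) = ⊤)
    (hMfg : M.FG)
    (hMsat : ∀ (n : ℕ) (x : G), 0 < n → n • x ∈ M → x ∈ M)
    (F : AddSubmonoid G) (hFM : F ≤ M)
    (hface : ∀ a b : G, a ∈ M → b ∈ M → a + b ∈ F → a ∈ F ∧ b ∈ F) :
    -- the subgroup generated by `F` is saturated in `G = Mᵍᵖ` ...
    (∀ (n : ℕ) (x : G), 0 < n → n • x ∈ AddSubgroup.closure (F : Set G) →
      x ∈ AddSubgroup.closure (F : Set G)) ∧
    -- ... hence a direct summand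
    ∃ K : AddSubgroup G, IsCompl (AddSubgroup.closure (F : Set G)) K :=
  stmt_1_general M hMsat F hFM hface
end

section
/- Let F be a face of a toric monoid M. Then there exists a group homomorphism χ : Mᵍᵖ → ℤ such that χ(m) ≥ 0 for all m ∈ M and χ(m) = 0 if and only if m ∈ F (for m ∈ M). -/
/-! For each generator `g` of `M` outside `F`, Farkas' lemma over `ℚ` gives a functional that is
nonnegative on the generators, vanishes on those in `F` and is positive at `g`: otherwise `-g`
would lie in the rational cone spanned by the generators and the negatives of those in `F`, and
clearing denominators would give `n • g + m ∈ F` with `n > 0` and `m ∈ M`, forcing `g ∈ F`.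
Scaled to be integral and summed over the generators outside `F`, these functionals give `χ`; the
face property propagates "`χ` vanishes exactly on `F`" from the generators to all of `M`. -/

namespace PointedCone

variable {𝕜 V : Type*} [Field 𝕜] [LinearOrder 𝕜] [IsStrictOrderedRing 𝕜]
  [AddCommGroup V] [Module 𝕜 V]

lemma dual_nonneg_of_mem_hull {s : Set V} {χ : Module.Dual 𝕜 V} (hχ : ∀ v ∈ s, 0 ≤ χ v)
    {x : V} (hx : x ∈ hull 𝕜 s) : 0 ≤ χ x :=
  (Submodule.span_le (p := (positive 𝕜 𝕜).comap χ)).mpr hχ hx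

lemma map_hull (π : V →ₗ[𝕜] V) (s : Set V) : (hull 𝕜 s).map π = hull 𝕜 (π '' s) :=
  Submodule.map_span _ s

lemma mem_hull_insert_of_map_mem {s : Set V} {u w : V} {χ : Module.Dual 𝕜 V}
    {π : V →ₗ[𝕜] V} (hπ : ∀ x, π x = x - (χ x / χ u) • u)
    (hχs : ∀ v ∈ s, 0 ≤ χ v) (hχu : χ u < 0) (hχw : χ w < 0)
    (h : π w ∈ (hull 𝕜 s).map π) : w ∈ hull 𝕜 (insert u s) := by
  obtain ⟨y, hy, hyw⟩ := mem_map.mp h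
  have hχy : 0 ≤ χ y := dual_nonneg_of_mem_hull hχs hy
  have hwy : w = y + ((χ w - χ y) / χ u) • u := by
    rw [hπ, hπ] at hyw
    rw [sub_div, sub_smul]
    linear_combination (norm := module) -hyw
  have hcoef : 0 ≤ (χ w - χ y) / χ u := div_nonneg_of_nonpos (by linarith) hχu.le
  rw [hwy]
  exact add_mem (Submodule.span_mono (Set.subset_insert u s) hy)
    (Submodule.smul_mem _ (⟨_, hcoef⟩ : {c : 𝕜 // 0 ≤ c})
      (Submodule.subset_span (Set.mem_insert u s)))

/-- **Farkas' lemma** for finitely generated cones over an ordered field. -/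
theorem exists_dual_nonneg_of_notMem_hull {ι : Type*} [Finite ι] (v : ι → V) {w : V}
    (hw : w ∉ hull 𝕜 (Set.range v)) :
    ∃ χ : Module.Dual 𝕜 V, (∀ i, 0 ≤ χ (v i)) ∧ χ w < 0 := by
  revert v w
  refine Finite.induction_empty_option ?_ ?_ ?_ ι (P := fun ι => ∀ (v : ι → V) {w : V},
    w ∉ hull 𝕜 (Set.range v) → ∃ χ : Module.Dual 𝕜 V, (∀ i, 0 ≤ χ (v i)) ∧ χ w < 0)
  · intro α β e h v w hw
    obtain ⟨χ, hχ, hχw⟩ := h (v ∘ e) (by rwa [EquivLike.range_comp])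
    exact ⟨χ, fun j => by simpa using hχ (e.symm j), hχw⟩
  · intro v w hw
    have hw0 : w ≠ 0 := fun h => hw (h ▸ zero_mem _)
    obtain ⟨f, hf⟩ := Module.Projective.exists_dual_eq_one 𝕜 hw0
    exact ⟨-f, fun i => i.elim, by simp [hf]⟩
  · intro α _ ih v w hw
    set u := v none
    obtain ⟨χ, hχ, hχw⟩ := ih (v ∘ some) fun h =>
      hw (Submodule.span_mono (Set.range_comp_subset_range _ _) h)
    by_cases hu : 0 ≤ χ u
    · exact ⟨χ, fun i => Option.rec hu hχ i, hχw⟩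
    push Not at hu
    -- Project along `u` onto `ker χ` and recurse: a functional separating the projected data,
    -- composed with the projection, vanishes on `u`.
    let π : V →ₗ[𝕜] V := LinearMap.id - (χ u)⁻¹ • χ.smulRight u
    have hπ : ∀ x, π x = x - (χ x / χ u) • u := fun x => by
      simp [π, div_eq_inv_mul, smul_smul]
    obtain ⟨ψ, hψ, hψw⟩ := ih (π ∘ v ∘ some) fun h => by
      rw [Set.range_comp, ← map_hull] at h
      refine hw ?_
      rw [Option.range_eq]
      exact mem_hull_insert_of_map_mem hπ (by simpa using hχ) hu hχw h
    refine ⟨ψ ∘ₗ π, fun i => Option.rec ?_ hψ i, hψw⟩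
    simp [hπ, u, hu.ne]

end PointedCone

lemma exists_nat_mul_eq_intCast {ι : Type*} [Fintype ι] (q : ι → ℚ) :
    ∃ D : ℕ, 0 < D ∧ ∀ i, ∃ z : ℤ, (z : ℚ) = D * q i := by
  refine ⟨∏ i, (q i).den, Finset.prod_pos fun i _ => (q i).pos, fun i => ?_⟩
  obtain ⟨e, he⟩ := Finset.dvd_prod_of_mem (fun i => (q i).den) (Finset.mem_univ i)
  refine ⟨(q i).num * e, ?_⟩
  rw [he]
  push_cast
  rw [← Rat.mul_den_eq_num]
  ring

lemma Module.Dual.exists_int_eq_nat_mul {ι : Type*} [Fintype ι]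
    (φ : Module.Dual ℚ (ι → ℚ)) :
    ∃ D : ℕ, 0 < D ∧ ∃ ψ : (ι → ℤ) →+ ℤ, ∀ x, (ψ x : ℚ) = D * φ (fun i => (x i : ℚ)) := by
  classical
  obtain ⟨D, hD, hz⟩ := exists_nat_mul_eq_intCast fun i => φ fun j => if i = j then 1 else 0
  choose z hz using hz
  refine ⟨D, hD, ∑ i, z i • Pi.evalAddMonoidHom (fun _ => ℤ) i, fun x => ?_⟩
  rw [φ.pi_apply_eq_sum_univ, Finset.mul_sum]
  simp only [AddMonoidHom.finsetSum_apply, AddMonoidHom.smul_apply, Pi.evalAddMonoidHom_apply,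
    smul_eq_mul, Int.cast_sum, Int.cast_mul, hz]
  exact Finset.sum_congr rfl fun i _ => by ring

lemma AddSubmonoid.exists_nsmul_mem_of_mem_hull {G V : Type*} [AddCommMonoid G]
    [AddCommGroup V] [Module ℚ V] (f : G →+ V) (S : AddSubmonoid G) {x : V}
    (hx : x ∈ PointedCone.hull ℚ (f '' S)) : ∃ n : ℕ, 0 < n ∧ ∃ y ∈ S, f y = n • x := by
  induction hx using Submodule.span_induction with
  | mem x hx =>
    obtain ⟨y, hy, rfl⟩ := hx
    exact ⟨1, one_pos, y, hy, (one_smul _ _).symm⟩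
  | zero => exact ⟨1, one_pos, 0, zero_mem S, by simp⟩
  | add x y _ _ hx hy =>
    obtain ⟨m, hm, a, ha, hfa⟩ := hx
    obtain ⟨n, hn, b, hb, hfb⟩ := hy
    refine ⟨m * n, Nat.mul_pos hm hn, n • a + m • b,
      add_mem (nsmul_mem ha n) (nsmul_mem hb m), ?_⟩
    rw [map_add, map_nsmul, map_nsmul, hfa, hfb, smul_add, mul_comm, mul_smul, mul_comm,
      mul_smul]
  | smul c x _ hx =>
    obtain ⟨n, hn, a, ha, hfa⟩ := hx
    refine ⟨(c : ℚ).den * n, Nat.mul_pos (c : ℚ).pos hn, (c : ℚ).num.toNat • a,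
      nsmul_mem ha _, ?_⟩
    have hnum : ((c : ℚ).num.toNat : ℚ) = (c : ℚ).den * c := by
      rw [mul_comm, Rat.mul_den_eq_num]
      exact_mod_cast Int.toNat_of_nonneg (Rat.num_nonneg.mpr c.2)
    rw [map_nsmul, hfa, ← Nat.cast_smul_eq_nsmul ℚ, ← Nat.cast_smul_eq_nsmul ℚ,
      ← Nat.cast_smul_eq_nsmul ℚ, show c • x = (c : ℚ) • x from rfl, smul_smul, smul_smul,
      hnum]
    push_cast
    ring_nf

namespace AddSubmonoid

variable {G : Type*}

def IsFaceOf [AddMonoid G] (F M : AddSubmonoid G) : Prop :=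
  ∀ a b : G, a ∈ M → b ∈ M → a + b ∈ F → a ∈ F ∧ b ∈ F

lemma IsFaceOf.mem_of_nsmul_mem [AddMonoid G] {F M : AddSubmonoid G} (hF : F.IsFaceOf M)
    {n : ℕ} (hn : 0 < n) {x : G} (hx : x ∈ M) (h : n • x ∈ F) : x ∈ F := by
  obtain ⟨k, rfl⟩ := Nat.exists_eq_add_of_lt hn
  rw [zero_add, succ_nsmul] at h
  exact (hF _ _ (nsmul_mem hx k) hx h).2

lemma IsFaceOf.nonneg_and_eq_zero_iff_of_closure [AddMonoid G] {T : Set G}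
    {F : AddSubmonoid G} (hF : F.IsFaceOf (closure T)) (χ : G →+ ℤ) (hχ : ∀ t ∈ T, 0 ≤ χ t)
    (hχF : ∀ t ∈ T, χ t = 0 ↔ t ∈ F) :
    ∀ m ∈ closure T, 0 ≤ χ m ∧ (χ m = 0 ↔ m ∈ F) := by
  intro m hm
  induction hm using closure_induction with
  | mem t ht => exact ⟨hχ t ht, hχF t ht⟩
  | zero => exact ⟨le_of_eq (map_zero χ).symm, by simp [zero_mem]⟩
  | add x y hx hy ihx ihy =>
    refine ⟨map_add χ x y ▸ add_nonneg ihx.1 ihy.1, ?_⟩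
    rw [map_add, add_eq_zero_iff_of_nonneg ihx.1 ihy.1, ihx.2, ihy.2]
    exact ⟨fun h => add_mem h.1 h.2, hF x y hx hy⟩

end AddSubmonoid

lemma exists_addMonoidHom_nonneg_and_eq_zero_iff {G : Type*} [AddMonoid G] (T : Finset G)
    (F : Set G) (h : ∀ g ∈ T, g ∉ F → ∃ χ : G →+ ℤ,
      (∀ t ∈ T, 0 ≤ χ t) ∧ (∀ t ∈ T, t ∈ F → χ t = 0) ∧ 0 < χ g) :
    ∃ χ : G →+ ℤ, (∀ t ∈ T, 0 ≤ χ t) ∧ ∀ t ∈ T, (χ t = 0 ↔ t ∈ F) := by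
  classical
  choose! χ hχT hχF hχg using h
  have hnonneg : ∀ t ∈ T, ∀ g ∈ T.filter (· ∉ F), 0 ≤ χ g t := fun t ht g hg =>
    hχT g (Finset.mem_filter.mp hg).1 (Finset.mem_filter.mp hg).2 t ht
  refine ⟨∑ g ∈ T.filter (· ∉ F), χ g, fun t ht => ?_, fun t ht => ?_⟩
  · rw [AddMonoidHom.finsetSum_apply]
    exact Finset.sum_nonneg (hnonneg t ht)
  rw [AddMonoidHom.finsetSum_apply, Finset.sum_eq_zero_iff_of_nonneg (hnonneg t ht)]
  refine ⟨fun h0 => ?_, fun htF g hg => ?_⟩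
  · by_contra htF
    exact (hχg t ht htF).ne' (h0 t (Finset.mem_filter.mpr ⟨ht, htF⟩))
  · obtain ⟨hgT, hgF⟩ := Finset.mem_filter.mp hg
    exact hχF g hgT hgF t ht htF

open Pointwise in
lemma AddSubmonoid.IsFaceOf.exists_addMonoidHom_pos {G : Type*} [AddCommGroup G]
    [Module.Free ℤ G] [Module.Finite ℤ G] {F M : AddSubmonoid G} (hF : F.IsFaceOf M)
    (T : Finset G) (hT : (T : Set G) ⊆ M) {g : G} (hg : g ∈ M) (hgF : g ∉ F) :
    ∃ χ : G →+ ℤ, (∀ t ∈ T, 0 ≤ χ t) ∧ (∀ t ∈ T, t ∈ F → χ t = 0) ∧ 0 < χ g := by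
  classical
  let e := (Module.Free.chooseBasis ℤ G).equivFun
  let toQ : G →+ (Module.Free.ChooseBasisIndex ℤ G → ℚ) :=
    ((Int.castAddHom ℚ).compLeft _).comp e.toAddMonoidHom
  have htoQ : Function.Injective toQ :=
    (Int.cast_injective.comp_left).comp e.injective
  let v : T ⊕ T.filter (· ∈ F) → _ := Sum.elim (fun t => toQ t) (fun t => -toQ t)
  have hgen : -toQ g ∉ PointedCone.hull ℚ (Set.range v) := by
    intro h
    have hv : Set.range v ⊆ toQ '' ↑(M ⊔ -F) := by
      rintro _ ⟨t | t, rfl⟩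
      · exact ⟨t, AddSubmonoid.mem_sup_left (hT t.2), rfl⟩
      · refine ⟨-(t : G), AddSubmonoid.mem_sup_right ?_, map_neg toQ (t : G)⟩
        simpa [AddSubmonoid.mem_neg] using (Finset.mem_filter.mp t.2).2
    obtain ⟨n, hn, y, hy, hyg⟩ :=
      AddSubmonoid.exists_nsmul_mem_of_mem_hull toQ _ (Submodule.span_mono hv h)
    obtain ⟨m, hm, z, hz, rfl⟩ := AddSubmonoid.mem_sup.mp hy
    have hsum : n • g + m = -z := by
      apply htoQ
      simp only [map_add, map_neg, map_nsmul] at hyg ⊢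
      linear_combination (norm := module) hyg
    rw [AddSubmonoid.mem_neg, ← hsum] at hz
    exact hgF (hF.mem_of_nsmul_mem hn hg (hF _ _ (nsmul_mem hg n) hm hz).1)
  obtain ⟨φ, hφ, hφg⟩ := PointedCone.exists_dual_nonneg_of_notMem_hull v hgen
  obtain ⟨D, hD, ψ, hψ⟩ := φ.exists_int_eq_nat_mul
  let χ := ψ.comp e.toAddMonoidHom
  have hχ : ∀ x, (χ x : ℚ) = D * φ (toQ x) := fun x => hψ (e x)
  refine ⟨χ, fun t ht => ?_, fun t ht htF => ?_, ?_⟩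
  · have : (0 : ℚ) ≤ χ t := hχ t ▸ mul_nonneg D.cast_nonneg (hφ (.inl ⟨t, ht⟩))
    exact_mod_cast this
  · have hneg := hφ (.inr ⟨t, Finset.mem_filter.mpr ⟨ht, htF⟩⟩)
    have : (χ t : ℚ) = 0 := hχ t ▸
      mul_eq_zero_of_right _ (le_antisymm (by simpa [v] using hneg) (hφ (.inl ⟨t, ht⟩)))
    exact_mod_cast this
  · have : (0 : ℚ) < χ g := hχ g ▸ mul_pos (Nat.cast_pos.mpr hD) (by simpa using hφg)
    exact_mod_cast this

theorem stmt_2_general {G : Type} [AddCommGroup G] [Module.Free ℤ G] [Module.Finite ℤ G]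
    (M : AddSubmonoid G)
    (hMfg : M.FG)
    (F : AddSubmonoid G)
    (hface : ∀ a b : G, a ∈ M → b ∈ M → a + b ∈ F → a ∈ F ∧ b ∈ F) :
    ∃ χ : G →+ ℤ, (∀ m ∈ M, 0 ≤ χ m) ∧ ∀ m ∈ M, (χ m = 0 ↔ m ∈ F) := by
  obtain ⟨T, rfl⟩ := hMfg
  have hF : F.IsFaceOf (AddSubmonoid.closure T) := hface
  obtain ⟨χ, hχ, hχF⟩ := exists_addMonoidHom_nonneg_and_eq_zero_iff T F fun g hg hgF =>
    hF.exists_addMonoidHom_pos T AddSubmonoid.subset_closure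
      (AddSubmonoid.subset_closure hg) hgF
  have hM := hF.nonneg_and_eq_zero_iff_of_closure χ hχ hχF
  exact ⟨χ, fun m hm => (hM m hm).1, fun m hm => (hM m hm).2⟩

/-- Let `F` be a face of a toric monoid `M` (realized as a finitely generated saturated
generating submonoid of its Grothendieck group `G = Mᵍᵖ`, a finitely generated free
abelian group).  Then there is a linear functional `χ : Mᵍᵖ → ℤ` which is nonnegative on
`M` and vanishes exactly on `F` (among elements of `M`). -/
theorem stmt_2 {G : Type} [AddCommGroup G] [Module.Free ℤ G] [Module.Finite ℤ G]
    (M : AddSubmonoid G)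
    (hMgen : AddSubgroup.closure (M : Set G) = ⊤)
    (hMfg : M.FG)
    (hMsat : ∀ (n : ℕ) (x : G), 0 < n → n • x ∈ M → x ∈ M)
    (F : AddSubmonoid G) (hFM : F ≤ M)
    (hface : ∀ a b : G, a ∈ M → b ∈ M → a + b ∈ F → a ∈ F ∧ b ∈ F) :
    ∃ χ : G →+ ℤ, (∀ m ∈ M, 0 ≤ χ m) ∧ ∀ m ∈ M, (χ m = 0 ↔ m ∈ F) :=
  stmt_2_general M hMfg F hface
end

section
/- Let F be a face of a toric monoid M, and let φ : Fᵍᵖ → ℤ be a group homomorphism with φ(f) ≥ 0 for all f ∈ F. Then there exists a group homomorphism ψ : Mᵍᵖ → ℤ extending φ such that ψ(m) ≥ 0 for all m ∈ M and ψ(m) > 0 for all m ∈ M \ F. -/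
/-!
Since `M` is saturated and `F` is a face, the quotient of `G` by the group generated by `F` is
torsion-free, hence free; so `φ` extends to some `φ₀ : G →+ ℤ`, and the images in the quotient of
the generators of `M` outside `F` admit no nontrivial nonnegative relation. By Gordan's theorem,
which over `ℤ` follows by eliminating one vector at a time, some functional vanishing on `F` is
positive on these generators, and adding a large multiple of it to `φ₀` gives `ψ`.
-/

open Finset

theorem exists_pos_add_mul {ι : Type*} (s : Finset ι) (a b : ι → ℤ) (hb : ∀ i ∈ s, 0 < b i) :
    ∃ N : ℤ, ∀ i ∈ s, 0 < a i + N * b i := by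
  refine ⟨1 + ∑ i ∈ s, |a i|, fun i hi => ?_⟩
  have hai : |a i| ≤ ∑ j ∈ s, |a j| := single_le_sum (fun j _ => abs_nonneg (a j)) hi
  have hN : 1 + ∑ j ∈ s, |a j| ≤ (1 + ∑ j ∈ s, |a j|) * b i :=
    le_mul_of_one_le_right (by linarith [abs_nonneg (a i)]) (hb i hi)
  linarith [neg_abs_le (a i)]

section NonnegIndependent

variable {ι Q : Type*} [AddCommGroup Q]

def NonnegIndependent (v : ι → Q) (s : Finset ι) : Prop :=
  ∀ a : ι → ℤ, (∀ i ∈ s, 0 ≤ a i) → ∑ i ∈ s, a i • v i = 0 → ∀ i ∈ s, a i = 0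

namespace NonnegIndependent

variable {v : ι → Q} {s t : Finset ι}

theorem mono (hv : NonnegIndependent v t) (hst : s ⊆ t) : NonnegIndependent v s := by
  classical
  intro a ha hsum i hi
  have h := hv (fun i => if i ∈ s then a i else 0) (fun i _ => by split_ifs <;> simp [*])
    (by simpa [ite_smul, sum_ite_mem, inter_eq_right.2 hst] using hsum) i (hst hi)
  simpa [hi] using h

theorem ne_zero (hv : NonnegIndependent v s) {i : ι} (hi : i ∈ s) : v i ≠ 0 := by
  classical
  intro h0
  have := hv (Pi.single i 1) (fun j _ => by simp [Pi.single_apply]; split_ifs <;> simp)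
    (by simp [Pi.single_apply, h0]) i hi
  simp at this

/-- As `f (v j) ≤ 0 < f (v i)`, each `f (v i) • v j - f (v j) • v i` is a nonnegative combination
of `v j` and `v i`, so a nonnegative relation among them yields one among the `v`. -/
theorem eliminate [DecidableEq ι] {j : ι} (hj : j ∉ s) (hv : NonnegIndependent v (insert j s))
    (f : Q →+ ℤ) (hf : ∀ i ∈ s, 0 < f (v i)) (hfj : f (v j) ≤ 0) :
    NonnegIndependent (fun i => f (v i) • v j - f (v j) • v i) s := by
  intro a ha hsum
  set b : ι → ℤ := Function.update (fun i => a i * -f (v j)) j (∑ i ∈ s, a i * f (v i))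
  have hbj : b j = ∑ i ∈ s, a i * f (v i) := Function.update_self _ _ _
  have hbs : ∀ i ∈ s, b i = a i * -f (v j) := fun i hi =>
    Function.update_of_ne (ne_of_mem_of_not_mem hi hj) _ _
  have hb : ∀ i ∈ insert j s, 0 ≤ b i := by
    intro i hi
    rcases mem_insert.1 hi with rfl | hi
    · exact hbj ▸ sum_nonneg fun k hk => mul_nonneg (ha k hk) (hf k hk).le
    · exact hbs i hi ▸ mul_nonneg (ha i hi) (neg_nonneg.2 hfj)
  have hbsum : ∑ i ∈ insert j s, b i • v i = 0 := by
    rw [sum_insert hj, sum_congr rfl fun i hi => by rw [hbs i hi], hbj, ← hsum]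
    simp only [smul_sub, sum_sub_distrib, sum_smul, smul_smul, mul_neg, neg_smul, sum_neg_distrib]
    abel
  have hb0 := hv b hb hbsum j (mem_insert_self j s)
  rw [hbj, sum_eq_zero_iff_of_nonneg fun k hk => mul_nonneg (ha k hk) (hf k hk).le] at hb0
  intro i hi
  exact (mul_eq_zero.1 (hb0 i hi)).resolve_right (hf i hi).ne'

theorem exists_addMonoidHom_pos [Module.Projective ℤ Q] (hv : NonnegIndependent v s) :
    ∃ f : Q →+ ℤ, ∀ i ∈ s, 0 < f (v i) := by
  classical
  induction s using Finset.induction_on generalizing v with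
  | empty => exact ⟨0, by simp⟩
  | insert j s hj ih =>
    obtain ⟨f, hf⟩ := ih (hv.mono (subset_insert j s))
    by_cases hfj : 0 < f (v j)
    · exact ⟨f, forall_mem_insert _ _ _ |>.2 ⟨hfj, hf⟩⟩
    obtain ⟨g, hg⟩ := ih (hv.eliminate hj f hf (not_lt.1 hfj))
    obtain ⟨e, he⟩ := Module.Projective.exists_dual_ne_zero ℤ (hv.ne_zero (mem_insert_self j s))
    -- `k` vanishes at `v j` and is positive on `s`; adding a large multiple of it to
    -- `e (v j) • e`, which is positive at `v j`, gives the desired functional.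
    set k : Q →+ ℤ := g (v j) • f - f (v j) • g
    have hk : ∀ i ∈ s, 0 < k (v i) := fun i hi => by
      simpa [k, smul_sub, mul_comm] using hg i hi
    obtain ⟨N, hN⟩ := exists_pos_add_mul s (fun i => e (v j) * e (v i)) (fun i => k (v i)) hk
    refine ⟨(e (v j) • e.toAddMonoidHom) + N • k, forall_mem_insert _ _ _ |>.2 ⟨?_, ?_⟩⟩
    · simpa [k, mul_comm] using mul_self_pos.2 he
    · simpa using hN

end NonnegIndependent

end NonnegIndependent

namespace AddSubmonoid

variable {G : Type*} [AddCommGroup G]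

theorem exists_sub_of_mem_closure (F : AddSubmonoid G) {x : G}
    (hx : x ∈ AddSubgroup.closure (F : Set G)) : ∃ a ∈ F, ∃ b ∈ F, a - b = x := by
  induction hx using AddSubgroup.closure_induction with
  | mem y hy => exact ⟨y, hy, 0, zero_mem F, sub_zero y⟩
  | zero => exact ⟨0, zero_mem F, 0, zero_mem F, sub_zero 0⟩
  | add x y _ _ ihx ihy =>
    obtain ⟨a, ha, b, hb, rfl⟩ := ihx
    obtain ⟨c, hc, d, hd, rfl⟩ := ihy
    exact ⟨a + c, add_mem ha hc, b + d, add_mem hb hd, by abel⟩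
  | neg x _ ih =>
    obtain ⟨a, ha, b, hb, rfl⟩ := ih
    exact ⟨b, hb, a, ha, (neg_sub a b).symm⟩

theorem nonneg_and_pos_of_mem_closure {S : Set G} {F : AddSubmonoid G} {ψ : G →+ ℤ}
    (hF : ∀ x ∈ F, 0 ≤ ψ x) (hS : ∀ x ∈ S, x ∉ F → 0 < ψ x) {m : G} (hm : m ∈ closure S) :
    0 ≤ ψ m ∧ (m ∉ F → 0 < ψ m) := by
  induction hm using closure_induction with
  | mem x hx =>
    by_cases hxF : x ∈ F
    · exact ⟨hF x hxF, absurd hxF⟩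
    · exact ⟨(hS x hx hxF).le, fun _ => hS x hx hxF⟩
  | zero => exact ⟨le_of_eq (map_zero ψ).symm, absurd (zero_mem F)⟩
  | add x y _ _ ihx ihy =>
    rw [map_add]
    refine ⟨add_nonneg ihx.1 ihy.1, fun hxy => ?_⟩
    by_cases hxF : x ∈ F
    · linarith [ihx.1, ihy.2 fun hyF => hxy (add_mem hxF hyF)]
    · linarith [ihx.2 hxF, ihy.1]

structure IsFaceOf_s3 (F M : AddSubmonoid G) : Prop where
  le : F ≤ M
  mem_of_add_mem : ∀ a b : G, a ∈ M → b ∈ M → a + b ∈ F → a ∈ F ∧ b ∈ F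

namespace IsFaceOf_s3

variable {F M : AddSubmonoid G}

theorem mem_of_nsmul_mem_s3 (hF : F.IsFaceOf_s3 M) {n : ℕ} {x : G} (hn : 0 < n) (hx : x ∈ M)
    (h : n • x ∈ F) : x ∈ F := by
  obtain ⟨k, rfl⟩ : ∃ k, n = k + 1 := ⟨n - 1, by omega⟩
  rw [succ_nsmul'] at h
  exact (hF.mem_of_add_mem x _ hx (nsmul_mem hx k) h).1

theorem mem_of_sum_mem (hF : F.IsFaceOf_s3 M) {ι : Type*} {s : Finset ι} {f : ι → G}
    (hf : ∀ i ∈ s, f i ∈ M) (h : ∑ i ∈ s, f i ∈ F) : ∀ i ∈ s, f i ∈ F := by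
  classical
  induction s using Finset.induction_on with
  | empty => simp
  | insert j s hj ih =>
    rw [Finset.sum_insert hj] at h
    rw [Finset.forall_mem_insert] at hf ⊢
    have := hF.mem_of_add_mem _ _ hf.1 (M.sum_mem hf.2) h
    exact ⟨this.1, ih hf.2 this.2⟩

theorem mem_of_mem_closure (hF : F.IsFaceOf_s3 M) {x : G} (hx : x ∈ M)
    (h : x ∈ AddSubgroup.closure (F : Set G)) : x ∈ F := by
  obtain ⟨a, ha, b, hb, rfl⟩ := F.exists_sub_of_mem_closure h
  exact (hF.mem_of_add_mem _ b hx (hF.le hb) (by rwa [sub_add_cancel])).1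

theorem mem_closure_of_nsmul_mem (hF : F.IsFaceOf_s3 M)
    (hM : ∀ (n : ℕ) (x : G), 0 < n → n • x ∈ M → x ∈ M) {n : ℕ} {g : G} (hn : 0 < n)
    (h : n • g ∈ AddSubgroup.closure (F : Set G)) : g ∈ AddSubgroup.closure (F : Set G) := by
  obtain ⟨a, ha, b, hb, hab⟩ := F.exists_sub_of_mem_closure h
  obtain ⟨k, rfl⟩ : ∃ k, n = k + 1 := ⟨n - 1, by omega⟩
  have hF' : (k + 1) • (g + b) ∈ F := by
    have : (k + 1) • (g + b) = a + k • b := by rw [smul_add, ← hab, succ_nsmul b k]; abel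
    exact this ▸ add_mem ha (nsmul_mem hb k)
  have hgb := hF.mem_of_nsmul_mem_s3 hn (hM _ _ hn (hF.le hF')) hF'
  simpa using sub_mem (AddSubgroup.subset_closure hgb) (AddSubgroup.subset_closure hb)

end IsFaceOf_s3

end AddSubmonoid

namespace AddSubgroup

variable {G : Type*} [AddCommGroup G] {H : AddSubgroup G}

theorem isAddTorsionFree_quotient (hH : ∀ (n : ℕ) (g : G), 0 < n → n • g ∈ H → g ∈ H) :
    IsAddTorsionFree (G ⧸ H.toIntSubmodule) := by
  refine ⟨fun n hn x y hxy => ?_⟩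
  obtain ⟨x, rfl⟩ := Submodule.mkQ_surjective _ x
  obtain ⟨y, rfl⟩ := Submodule.mkQ_surjective _ y
  have h0 : H.toIntSubmodule.mkQ (n • (x - y)) = 0 := by simpa [smul_sub, sub_eq_zero] using hxy
  rw [Submodule.mkQ_apply, Submodule.Quotient.mk_eq_zero] at h0
  rw [Submodule.mkQ_apply, Submodule.mkQ_apply, Submodule.Quotient.eq]
  exact hH n _ (Nat.pos_of_ne_zero hn) h0

theorem exists_extend_of_saturated [Module.Finite ℤ G]
    (hH : ∀ (n : ℕ) (g : G), 0 < n → n • g ∈ H → g ∈ H) (φ : H →+ ℤ) :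
    ∃ ψ : G →+ ℤ, ∀ x : H, ψ x = φ x := by
  have := isAddTorsionFree_quotient hH
  set p := H.toIntSubmodule
  obtain ⟨σ, hσ⟩ := p.mkQ.exists_rightInverse_of_surjective p.range_mkQ
  have hsplit := (LinearMap.exact_subtype_mkQ p).split_tfae'.out 0 1
  obtain ⟨-, r, hr⟩ := hsplit.1 ⟨p.injective_subtype, σ, hσ⟩
  exact ⟨(φ.toIntLinearMap ∘ₗ r).toAddMonoidHom, fun x => congrArg φ (LinearMap.congr_fun hr x)⟩

end AddSubgroup

theorem AddSubmonoid.IsFaceOf_s3.exists_separating_addMonoidHom {G : Type*} [AddCommGroup G]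
    [Module.Finite ℤ G] {F M : AddSubmonoid G} (hF : F.IsFaceOf_s3 M)
    (hM : ∀ (n : ℕ) (x : G), 0 < n → n • x ∈ M → x ∈ M) (T : Finset G)
    (hT : ∀ t ∈ T, t ∈ M ∧ t ∉ F) :
    ∃ ℓ : G →+ ℤ, (∀ x ∈ AddSubgroup.closure (F : Set G), ℓ x = 0) ∧ ∀ t ∈ T, 0 < ℓ t := by
  have := AddSubgroup.isAddTorsionFree_quotient fun _ _ hn => hF.mem_closure_of_nsmul_mem hM hn
  set p := (AddSubgroup.closure (F : Set G)).toIntSubmodule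
  have hv : NonnegIndependent p.mkQ T := by
    intro a ha hsum t ht
    have hsum_eq : ∑ t ∈ T, (a t).toNat • t = ∑ t ∈ T, a t • t :=
      Finset.sum_congr rfl fun t ht => by rw [← natCast_zsmul, Int.toNat_of_nonneg (ha t ht)]
    have hsumF : ∑ t ∈ T, (a t).toNat • t ∈ F := by
      refine hF.mem_of_mem_closure (M.sum_mem fun t ht => nsmul_mem (hT t ht).1 _) ?_
      rw [hsum_eq]
      have h0 : p.mkQ (∑ t ∈ T, a t • t) = 0 := by simpa only [map_sum, map_zsmul] using hsum
      exact (Submodule.Quotient.mk_eq_zero p).1 h0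
    have htF := hF.mem_of_sum_mem (fun t ht => nsmul_mem (hT t ht).1 _) hsumF t ht
    by_contra hat
    have := ha t ht
    exact (hT t ht).2 (hF.mem_of_nsmul_mem_s3 (by omega) (hT t ht).1 htF)
  obtain ⟨f, hf⟩ := hv.exists_addMonoidHom_pos
  refine ⟨f.comp p.mkQ.toAddMonoidHom, fun x hx => ?_, hf⟩
  simp [(Submodule.Quotient.mk_eq_zero p).2 hx]

theorem stmt_3_general {G : Type} [AddCommGroup G] [Module.Finite ℤ G]
    (M : AddSubmonoid G)
    (hMfg : M.FG)
    (hMsat : ∀ (n : ℕ) (x : G), 0 < n → n • x ∈ M → x ∈ M)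
    (F : AddSubmonoid G) (hFM : F ≤ M)
    (hface : ∀ a b : G, a ∈ M → b ∈ M → a + b ∈ F → a ∈ F ∧ b ∈ F)
    (φ : AddSubgroup.closure (F : Set G) →+ ℤ)
    (hφ : ∀ (f : G) (hf : f ∈ F), 0 ≤ φ ⟨f, AddSubgroup.subset_closure hf⟩) :
    ∃ ψ : G →+ ℤ,
      (∀ x : AddSubgroup.closure (F : Set G), ψ x = φ x) ∧
      (∀ m ∈ M, 0 ≤ ψ m) ∧
      (∀ m ∈ M, m ∉ F → 0 < ψ m) := by
  classical
  have hF : F.IsFaceOf_s3 M := ⟨hFM, hface⟩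
  obtain ⟨φ₀, hφ₀⟩ := AddSubgroup.exists_extend_of_saturated
    (fun _ _ hn => hF.mem_closure_of_nsmul_mem hMsat hn) φ
  obtain ⟨S, rfl⟩ := hMfg
  set T := S.filter (· ∉ F)
  obtain ⟨ℓ, hℓF, hℓT⟩ := hF.exists_separating_addMonoidHom hMsat T fun t ht =>
    ⟨AddSubmonoid.subset_closure (Finset.mem_filter.1 ht).1, (Finset.mem_filter.1 ht).2⟩
  obtain ⟨N, hN⟩ := exists_pos_add_mul T φ₀ ℓ hℓT
  have hψ : ∀ x : AddSubgroup.closure (F : Set G), (φ₀ + N • ℓ) x = φ x := fun x => by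
    simp [hℓF x x.2, hφ₀]
  have hψM := fun m (hm : m ∈ AddSubmonoid.closure (S : Set G)) =>
    AddSubmonoid.nonneg_and_pos_of_mem_closure (ψ := φ₀ + N • ℓ)
      (fun x hx => (hψ ⟨x, _⟩).symm ▸ hφ x hx)
      (fun x hx hxF => by simpa using hN x (Finset.mem_filter.2 ⟨hx, hxF⟩)) hm
  exact ⟨φ₀ + N • ℓ, hψ, fun m hm => (hψM m hm).1, fun m hm => (hψM m hm).2⟩

/-- Let `F` be a face of a toric monoid `M` (realized as a finitely generated saturated
generating submonoid of its Grothendieck group `G = Mᵍᵖ`, a finitely generated free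
abelian group), and let `φ : Fᵍᵖ → ℤ` (where `Fᵍᵖ` is the subgroup of `G` generated by
`F`) be nonnegative on `F`.  Then `φ` extends to `ψ : Mᵍᵖ → ℤ` which is nonnegative on
`M` and strictly positive on `M \ F`. -/
theorem stmt_3 {G : Type} [AddCommGroup G] [Module.Free ℤ G] [Module.Finite ℤ G]
    (M : AddSubmonoid G)
    (hMgen : AddSubgroup.closure (M : Set G) = ⊤)
    (hMfg : M.FG)
    (hMsat : ∀ (n : ℕ) (x : G), 0 < n → n • x ∈ M → x ∈ M)
    (F : AddSubmonoid G) (hFM : F ≤ M)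
    (hface : ∀ a b : G, a ∈ M → b ∈ M → a + b ∈ F → a ∈ F ∧ b ∈ F)
    (φ : AddSubgroup.closure (F : Set G) →+ ℤ)
    (hφ : ∀ (f : G) (hf : f ∈ F), 0 ≤ φ ⟨f, AddSubgroup.subset_closure hf⟩) :
    ∃ ψ : G →+ ℤ,
      (∀ x : AddSubgroup.closure (F : Set G), ψ x = φ x) ∧
      (∀ m ∈ M, 0 ≤ ψ m) ∧
      (∀ m ∈ M, m ∉ F → 0 < ψ m) :=
  stmt_3_general M hMfg hMsat F hFM hface φ hφ
end

section
/- Let D be a finite diagram in the category of toric monoids, and let L be the colimit of the induced diagram Dᵍᵖ of Grothendieck groups in the category of finitely generated free abelian groups (i.e., the colimit in abelian groups modulo torsion). Then the colimit of D in the category of toric monoids exists and is the image in L of the direct sum of the objects of D; in particular, colim(D)ᵍᵖ = colim(Dᵍᵖ). -/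
/-! The image of `⨁ M j` in `L` generates the subgroup `S = ⨆ j, ψ j (G j)`. As a subgroup of a
finitely generated free abelian group, `S` is again one, so the cocone `ψ` corestricts to `S`;
by uniqueness of factorizations the inclusion `S → L` then has a section, i.e. `S = L`.
The universal property among toric monoids is the one among free groups, because the factorization
`w` of `g` sends `ψ j (M j)` onto `g j (M j) ⊆ N`. -/

open CategoryTheory

theorem AddSubgroup.closure_coe_iSup {ι : Sort*} {A : Type*} [AddGroup A] (p : ι → AddSubmonoid A) :
    closure ((⨆ i, p i : AddSubmonoid A) : Set A) = ⨆ i, closure (p i : Set A) := by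
  refine le_antisymm (closure_le _ |>.mpr ?_) (iSup_le fun i => closure_mono ?_)
  · show ⨆ i, p i ≤ (⨆ i, closure (p i : Set A)).toAddSubmonoid
    exact iSup_le fun i => subset_closure.trans (le_iSup (fun i => closure (p i : Set A)) i)
  · exact le_iSup p i

theorem AddSubgroup.closure_iSup_map_eq_iSup_range {ι : Sort*} {G : ι → Type*} [∀ i, AddGroup (G i)]
    {A : Type*} [AddGroup A] (M : ∀ i, AddSubmonoid (G i)) (ψ : ∀ i, G i →+ A)
    (hM : ∀ i, closure (M i : Set (G i)) = ⊤) :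
    closure ((⨆ i, (M i).map (ψ i) : AddSubmonoid A) : Set A) = ⨆ i, (ψ i).range := by
  simp_rw [closure_coe_iSup, AddSubmonoid.coe_map, ← AddMonoidHom.map_closure, hM,
    AddMonoidHom.range_eq_map]

section
variable {J : Type} [Category J] {G : J → Type} [∀ j, AddCommGroup (G j)]
  (f : ∀ {i j : J}, (i ⟶ j) → (G i →+ G j)) {L : Type} [AddCommGroup L] (ψ : ∀ j, G j →+ L)

def IsFreeColimit : Prop :=
  ∀ (H : Type) [AddCommGroup H] [Module.Free ℤ H] [Module.Finite ℤ H]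
    (g : ∀ j, G j →+ H), (∀ {i j : J} (u : i ⟶ j), (g j).comp (f u) = g i) →
    ∃! w : L →+ H, ∀ j, w.comp (ψ j) = g j

variable {f ψ}

theorem IsFreeColimit.hom_ext (h : IsFreeColimit f ψ)
    (hψ : ∀ {i j : J} (u : i ⟶ j), (ψ j).comp (f u) = ψ i)
    {H : Type} [AddCommGroup H] [Module.Free ℤ H] [Module.Finite ℤ H] {v w : L →+ H}
    (hvw : ∀ j, v.comp (ψ j) = w.comp (ψ j)) : v = w := by
  obtain ⟨_, -, huniq⟩ := h H (fun j => w.comp (ψ j))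
    (fun u => by rw [AddMonoidHom.comp_assoc, hψ])
  exact (huniq v hvw).trans (huniq w fun _ => rfl).symm

theorem IsFreeColimit.iSup_range_eq_top [Module.Free ℤ L] [Module.Finite ℤ L]
    (h : IsFreeColimit f ψ) (hψ : ∀ {i j : J} (u : i ⟶ j), (ψ j).comp (f u) = ψ i) :
    ⨆ j, (ψ j).range = ⊤ := by
  -- `S` is free and finite over `ℤ` as a submodule of `L` over a PID.
  set S := AddSubgroup.toIntSubmodule (⨆ j, (ψ j).range)
  have hS : ∀ j x, ψ j x ∈ S := fun j x => AddSubgroup.mem_iSup_of_mem j ⟨x, rfl⟩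
  obtain ⟨r, hr, -⟩ := h S (fun j => (ψ j).codRestrict S.toAddSubmonoid (hS j))
    (fun u => by ext x; exact congr($(hψ u) x))
  have hr_id : S.toAddSubmonoid.subtype.comp r = AddMonoidHom.id L :=
    h.hom_ext hψ fun j => by ext x; exact congr(($(hr j) x : L))
  refine eq_top_iff.mpr fun x _ => ?_
  have hx : (r x : L) = x := congr($hr_id x)
  exact hx ▸ (r x).2

end

theorem stmt_4_general
    (J : Type) [SmallCategory J]
    (G : J → Type) [∀ j, AddCommGroup (G j)]
    (M : ∀ j, AddSubmonoid (G j))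
    -- each `(G j, M j)` is a toric monoid:
    (hgen : ∀ j, AddSubgroup.closure ((M j : Set (G j))) = ⊤)
    -- the diagram:
    (f : ∀ {i j : J}, (i ⟶ j) → (G i →+ G j))
    -- `L` is the colimit of `Dᵍᵖ` in finitely generated free abelian groups:
    (L : Type) [AddCommGroup L] [Module.Free ℤ L] [Module.Finite ℤ L]
    (ψ : ∀ j, G j →+ L)
    (hψ : ∀ {i j : J} (u : i ⟶ j), (ψ j).comp (f u) = ψ i)
    (huniv : ∀ (H : Type) [AddCommGroup H] [Module.Free ℤ H] [Module.Finite ℤ H]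
      (g : ∀ j, G j →+ H), (∀ {i j : J} (u : i ⟶ j), (g j).comp (f u) = g i) →
      ∃! w : L →+ H, ∀ j, w.comp (ψ j) = g j) :
    -- the image of the direct sum generates `L`: `colim(D)ᵍᵖ = colim(Dᵍᵖ)`
    AddSubgroup.closure ((⨆ j, (M j).map (ψ j) : AddSubmonoid L) : Set L) = ⊤ ∧
    -- and `(L, ⨆ j, ψ j (M j))` is the colimit of `D` in toric monoids:
    (∀ (H : Type) [AddCommGroup H] [Module.Free ℤ H] [Module.Finite ℤ H]
      (N : AddSubmonoid H), AddSubgroup.closure (N : Set H) = ⊤ → N.FG →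
      (∀ (n : ℕ) (x : H), 0 < n → n • x ∈ N → x ∈ N) →
      ∀ (g : ∀ j, G j →+ H), (∀ {i j : J} (u : i ⟶ j), (g j).comp (f u) = g i) →
      (∀ j, (M j).map (g j) ≤ N) →
      ∃! w : L →+ H, (∀ j, w.comp (ψ j) = g j) ∧
        (⨆ j, (M j).map (ψ j) : AddSubmonoid L).map w ≤ N) := by
  refine ⟨by rw [AddSubgroup.closure_iSup_map_eq_iSup_range M ψ hgen,
    IsFreeColimit.iSup_range_eq_top huniv hψ], ?_⟩
  intro H _ _ _ N _ _ _ g hg hgN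
  obtain ⟨w, hw, huniq⟩ := huniv H g hg
  refine ⟨w, ⟨hw, ?_⟩, fun v hv => huniq v hv.1⟩
  rw [AddSubmonoid.map_iSup]
  exact iSup_le fun j => by rw [AddSubmonoid.map_map, hw j]; exact hgN j

/-- Colimits exist in the category of toric monoids.  A finite diagram `D` of toric
monoids is given by: a finite index category `J`, toric monoids `M j` realized as
finitely generated saturated generating submonoids of their Grothendieck groups `G j`
(finitely generated free abelian groups), and functorial maps.  Let `L` (with cocone
`ψ`) be the colimit of the induced diagram `Dᵍᵖ` in finitely generated free abelian
groups.  Then the image `⨆ j, ψ j (M j)` in `L` of the direct sum of the objects is the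
colimit of `D` in toric monoids: it generates `L` (so `colim(D)ᵍᵖ = colim(Dᵍᵖ) = L`),
and any compatible family of maps to a toric monoid `(H, N)` factors uniquely
through it. -/
theorem stmt_4
    (J : Type) [SmallCategory J] [FinCategory J]
    (G : J → Type) [∀ j, AddCommGroup (G j)]
    [∀ j, Module.Free ℤ (G j)] [∀ j, Module.Finite ℤ (G j)]
    (M : ∀ j, AddSubmonoid (G j))
    -- each `(G j, M j)` is a toric monoid:
    (hgen : ∀ j, AddSubgroup.closure ((M j : Set (G j))) = ⊤)
    (hfg : ∀ j, (M j).FG)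
    (hsat : ∀ (j : J) (n : ℕ) (x : G j), 0 < n → n • x ∈ M j → x ∈ M j)
    -- the diagram:
    (f : ∀ {i j : J}, (i ⟶ j) → (G i →+ G j))
    (hf_id : ∀ i, f (𝟙 i) = AddMonoidHom.id (G i))
    (hf_comp : ∀ {i j l : J} (u : i ⟶ j) (v : j ⟶ l), f (u ≫ v) = (f v).comp (f u))
    (hf_mono : ∀ {i j : J} (u : i ⟶ j), (M i).map (f u) ≤ M j)
    -- `L` is the colimit of `Dᵍᵖ` in finitely generated free abelian groups:
    (L : Type) [AddCommGroup L] [Module.Free ℤ L] [Module.Finite ℤ L]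
    (ψ : ∀ j, G j →+ L)
    (hψ : ∀ {i j : J} (u : i ⟶ j), (ψ j).comp (f u) = ψ i)
    (huniv : ∀ (H : Type) [AddCommGroup H] [Module.Free ℤ H] [Module.Finite ℤ H]
      (g : ∀ j, G j →+ H), (∀ {i j : J} (u : i ⟶ j), (g j).comp (f u) = g i) →
      ∃! w : L →+ H, ∀ j, w.comp (ψ j) = g j) :
    -- the image of the direct sum generates `L`: `colim(D)ᵍᵖ = colim(Dᵍᵖ)`
    AddSubgroup.closure ((⨆ j, (M j).map (ψ j) : AddSubmonoid L) : Set L) = ⊤ ∧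
    -- and `(L, ⨆ j, ψ j (M j))` is the colimit of `D` in toric monoids:
    (∀ (H : Type) [AddCommGroup H] [Module.Free ℤ H] [Module.Finite ℤ H]
      (N : AddSubmonoid H), AddSubgroup.closure (N : Set H) = ⊤ → N.FG →
      (∀ (n : ℕ) (x : H), 0 < n → n • x ∈ N → x ∈ N) →
      ∀ (g : ∀ j, G j →+ H), (∀ {i j : J} (u : i ⟶ j), (g j).comp (f u) = g i) →
      (∀ j, (M j).map (g j) ≤ N) →
      ∃! w : L →+ H, (∀ j, w.comp (ψ j) = g j) ∧
        (⨆ j, (M j).map (ψ j) : AddSubmonoid L).map w ≤ N) :=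
  stmt_4_general J G M hgen f L ψ hψ huniv
end

section
/- Let R be a Noetherian integrally closed domain with fraction field K. Then R equals the intersection, inside K, of the localizations R_𝔭 over all height-one prime ideals 𝔭 of R. -/
/-! If `x = a / b ∉ R`, then `a ∉ (b)`, and an associated prime `P` of `R ⧸ (b)` containing the
annihilator of `a` keeps `x` out of `R_P`. Such a `P` has height one: writing `P = ((b) : d)`, the
element `y = d / b` satisfies `y P ⊆ R` but is not integral over `R` (as `d ∉ (b)`), so by the
determinant trick `y P ⊄ P`. Then `y P = R` after localizing, so `P R_P = y⁻¹ R_P` is principal and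
`R_P` is a discrete valuation ring. -/

open IsLocalRing

section

variable {R : Type*} [CommRing R]

theorem Ideal.eq_bot_of_lt_of_height_eq_one [IsDomain R] {p q : Ideal R} [p.IsPrime]
    [q.IsPrime] (hp : p.height = 1) (hqp : q < p) : q = ⊥ := by
  have h : q.height + 1 ≤ 0 + 1 := by
    simpa [hp] using Ideal.height_add_one_le_of_lt_of_isPrime hqp
  rwa [ENat.add_le_add_iff_right ENat.one_ne_top, nonpos_iff_eq_zero,
    Ideal.height_eq_zero_iff_eq_bot] at h

theorem Ideal.height_eq_one_of_isPrincipal_maximalIdeal [IsDomain R] [IsNoetherianRing R]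
    {p : Ideal R} [p.IsPrime] (hp : p ≠ ⊥)
    (h : (maximalIdeal (Localization.AtPrime p)).IsPrincipal) : p.height = 1 := by
  have : IsPrincipalIdealRing (Localization.AtPrime p) :=
    ((tfae_of_isNoetherianRing_of_isLocalRing_of_isDomain _).out 4 0).mp h
  have hle : (p.height : WithBot ℕ∞) ≤ 1 := by
    rw [← IsLocalization.AtPrime.ringKrullDim_eq_height p (Localization.AtPrime p)]
    exact Ring.krullDimLE_iff.mp inferInstance
  refine le_antisymm (mod_cast hle) ?_
  rwa [Order.one_le_iff_ne_zero, ne_eq, Ideal.height_eq_zero_iff_eq_bot]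

theorem Localization.AtPrime.maximalIdeal_eq_span_of_mul_eq_mul {p : Ideal R} [p.IsPrime]
    {t u : R} (ht : t ∈ p) (hu : u ∉ p) (h : ∀ r ∈ p, ∃ s, u * r = t * s) :
    maximalIdeal (Localization.AtPrime p) = Ideal.span {algebraMap R _ t} := by
  rw [← Localization.AtPrime.map_eq_maximalIdeal]
  refine le_antisymm (Ideal.map_le_iff_le_comap.mpr fun r hr => ?_) (Ideal.span_le.mpr ?_)
  · obtain ⟨s, hs⟩ := h r hr
    have hu' : IsUnit (algebraMap R (Localization.AtPrime p) u) :=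
      IsLocalization.map_units _ (⟨u, hu⟩ : p.primeCompl)
    rw [Ideal.mem_comap, Ideal.mem_span_singleton, ← hu'.dvd_mul_left, ← map_mul, hs, map_mul]
    exact dvd_mul_right _ _
  · simpa using Ideal.mem_map_of_mem _ ht

theorem exists_mem_algebraMap_mul_notMem_of_not_isIntegral {A : Type*} [CommRing A] [IsDomain A]
    [Algebra R A] [FaithfulSMul R A] [IsNoetherianRing R] {p : Ideal R} (hp : p ≠ ⊥) {y : A}
    (hy : ¬IsIntegral R y) (hpy : ∀ r ∈ p, ∃ s, algebraMap R A s = algebraMap R A r * y) :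
    ∃ t ∈ p, ∃ u ∉ p, algebraMap R A u = algebraMap R A t * y := by
  by_contra! h
  refine hy (isIntegral_of_smul_mem_submodule (Submodule.map (Algebra.linearMap R A) p) ?_
    (Submodule.FG.map _ (IsNoetherian.noetherian p)) y ?_)
  · rw [ne_eq, ← Submodule.map_bot (Algebra.linearMap R A),
      (Submodule.map_injective_of_injective (FaithfulSMul.algebraMap_injective R A)).eq_iff]
    exact hp
  · rintro _ ⟨r, hr, rfl⟩
    obtain ⟨s, hs⟩ := hpy r hr
    exact ⟨s, of_not_not fun hsp => h r hr s hsp hs, by simp [hs, mul_comm]⟩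

theorem Submodule.mem_colon_bot_mk_span_singleton_iff_dvd {b d r : R} :
    r ∈ (⊥ : Submodule R (R ⧸ Ideal.span {b})).colon {Ideal.Quotient.mk _ d} ↔ b ∣ r * d := by
  rw [Submodule.mem_colon_singleton, Submodule.mem_bot, Algebra.smul_def,
    Ideal.Quotient.algebraMap_eq, ← map_mul, Ideal.Quotient.eq_zero_iff_mem,
    Ideal.mem_span_singleton]

theorem IsAssociatedPrime.height_eq_one_of_quotient_span_singleton [IsDomain R]
    [IsNoetherianRing R] [IsIntegrallyClosed R] {b : R} (hb : b ≠ 0) {P : Ideal R}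
    (hP : IsAssociatedPrime P (R ⧸ Ideal.span {b})) : P.height = 1 := by
  obtain ⟨hPp, d', hPd⟩ := isAssociatedPrime_iff.mp hP
  obtain ⟨d, rfl⟩ := Ideal.Quotient.mk_surjective d'
  have memP (r : R) : r ∈ P ↔ b ∣ r * d := by
    rw [hPd, Submodule.mem_colon_bot_mk_span_singleton_iff_dvd]
  have hP0 : P ≠ ⊥ := fun h => hb (by simpa [h] using (memP b).mpr (dvd_mul_right b d))
  let K := FractionRing R
  have hinj := IsFractionRing.injective R K
  have hbK : algebraMap R K b ≠ 0 := (map_ne_zero_iff _ hinj).mpr hb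
  set y : K := algebraMap R K d / algebraMap R K b
  have hPy : ∀ r ∈ P, ∃ s, algebraMap R K s = algebraMap R K r * y := by
    intro r hr
    obtain ⟨s, hs⟩ := (memP r).mp hr
    refine ⟨s, ?_⟩
    rw [← mul_div_assoc, eq_div_iff hbK, ← map_mul, ← map_mul, hs, mul_comm]
  have hy : ¬IsIntegral R y := by
    intro hint
    obtain ⟨c, hc⟩ := IsIntegrallyClosed.isIntegral_iff.mp hint
    refine hPp.one_notMem ((memP 1).mpr ⟨c, hinj ?_⟩)
    rw [one_mul, map_mul, hc, mul_div_cancel₀ _ hbK]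
  obtain ⟨t, ht, u, hu, htu⟩ := exists_mem_algebraMap_mul_notMem_of_not_isIntegral hP0 hy hPy
  refine Ideal.height_eq_one_of_isPrincipal_maximalIdeal hP0
    ⟨⟨_, Localization.AtPrime.maximalIdeal_eq_span_of_mul_eq_mul ht hu fun r hr => ?_⟩⟩
  obtain ⟨s, hs⟩ := hPy r hr
  exact ⟨s, hinj (by rw [map_mul, map_mul, htu, hs]; ring)⟩

end

/-- A Noetherian integrally closed domain `R` is the intersection, inside its fraction
field `K`, of its localizations at height-one primes.  Membership of `x : K` in the
localization `R_𝔭 ⊆ K` is expressed as: `x` can be written with denominator outside `𝔭`.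
"`𝔭` has height one" is expressed as: `𝔭` is a nonzero prime such that the only prime
strictly contained in it is `⊥`. -/
theorem stmt_7 (R K : Type*) [CommRing R] [IsDomain R] [IsNoetherianRing R]
    [IsIntegrallyClosed R] [Field K] [Algebra R K] [IsFractionRing R K] (x : K) :
    (∃ r : R, algebraMap R K r = x) ↔
      ∀ p : Ideal R, p.IsPrime → p ≠ ⊥ →
        (∀ q : Ideal R, q.IsPrime → q < p → q = ⊥) →
        ∃ a b : R, b ∉ p ∧ algebraMap R K b * x = algebraMap R K a := by
  refine ⟨fun ⟨r, hr⟩ p hp _ _ => ⟨r, 1, hp.one_notMem, by rw [map_one, one_mul, hr]⟩, fun H => ?_⟩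
  by_contra hx
  obtain ⟨a, b, hb, rfl⟩ := IsFractionRing.div_surjective (A := R) x
  have hinj := IsFractionRing.injective R K
  have hbK : algebraMap R K b ≠ 0 := (map_ne_zero_iff _ hinj).mpr (nonZeroDivisors.ne_zero hb)
  have ha : Ideal.Quotient.mk (Ideal.span {b}) a ≠ 0 := by
    rw [ne_eq, Ideal.Quotient.eq_zero_iff_mem, Ideal.mem_span_singleton]
    rintro ⟨c, rfl⟩
    exact hx ⟨c, by rw [map_mul, mul_div_cancel_left₀ _ hbK]⟩
  obtain ⟨P, hP, hle⟩ := exists_le_isAssociatedPrime_of_isNoetherianRing R _ ha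
  have hP1 := hP.height_eq_one_of_quotient_span_singleton (nonZeroDivisors.ne_zero hb)
  have hPp := hP.isPrime
  obtain ⟨a', b', hb'P, hab⟩ := H P hPp (Ideal.ne_bot_of_height_eq_one hP1)
    fun q _ hq => Ideal.eq_bot_of_lt_of_height_eq_one hP1 hq
  refine hb'P (hle (Submodule.mem_colon_bot_mk_span_singleton_iff_dvd.mpr ⟨a', hinj ?_⟩))
  rw [map_mul, map_mul, ← hab]
  field_simp
end

section
/- Let k be a field, X and Y schemes over k, and f : X → Y a k-morphism. Suppose there are open subschemes U ⊆ X and V ⊆ Y such that f restricts to an isomorphism U → V, and suppose X and Y are integral normal Noetherian schemes whose complements X \ U and Y \ V have codimension at least 2. Then f is Stein, i.e., the natural map 𝒪_Y → f_* 𝒪_X is an isomorphism. -/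
/-!
Sections of `f_* 𝒪_X` over `W ⊆ V` are those of `𝒪_Y` because `f` is an isomorphism over `V`,
and since both sides are sheaves it suffices to compare them on nonempty affine opens `W`.
There the restriction `Γ(Y, W) → Γ(Y, W ∩ V)` is bijective: it is injective because `Y` is
integral, and surjective by algebraic Hartogs, since `Γ(Y, W)` is a Noetherian normal domain,
hence the intersection of its localizations at primes of height `≤ 1`, and these primes are
points of codimension `≤ 1`, which lie in `V`. As `Γ(X, f⁻¹W) → Γ(X, f⁻¹(W ∩ V))` is injective
(`X` is integral), the naturality square of `f` then forces `Γ(Y, W) → Γ(X, f⁻¹W)` to be bijective.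
-/

open AlgebraicGeometry CategoryTheory TopologicalSpace

namespace IsLocalRing

variable {R : Type*} [CommRing R] [IsLocalRing R] [IsNoetherianRing R]

theorem ringKrullDim_le_one_of_isPrincipal_maximalIdeal (h : (maximalIdeal R).IsPrincipal) :
    ringKrullDim R ≤ 1 := by
  obtain ⟨x, hx⟩ := h.principal
  have hx_nonunit : ¬IsUnit x := (mem_maximalIdeal x).mp (hx ▸ Ideal.mem_span_singleton_self x)
  rw [← maximalIdeal_height_eq_ringKrullDim, hx]
  exact_mod_cast Ideal.height_span_singleton_le_one hx_nonunit

variable {K : Type*} [IsIntegrallyClosed R] [Field K] [Algebra R K] [IsFractionRing R K]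

theorem isPrincipal_maximalIdeal_of_le_colon {u : K} (hu : u ∉ (1 : Submodule R K))
    (hmu : maximalIdeal R ≤ (1 : Submodule R K).colon {u}) : (maximalIdeal R).IsPrincipal := by
  by_cases hm : maximalIdeal R = ⊥
  · rw [hm]; infer_instance
  have hmul : ∀ z ∈ maximalIdeal R, ∃ w : R, algebraMap R K w = u * algebraMap R K z := by
    intro z hz
    simpa [Submodule.mem_colon_singleton, Submodule.mem_one, Algebra.smul_def, mul_comm]
      using hmu hz
  set M : Submodule R K := Submodule.map (Algebra.linearMap R K) (maximalIdeal R)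
  by_cases hstab : ∀ n ∈ M, u • n ∈ M
  · have hM : M ≠ ⊥ := by
      rw [← Submodule.map_bot (Algebra.linearMap R K)]
      exact (Submodule.map_injective_of_injective (IsFractionRing.injective R K)).ne hm
    have hint := isIntegral_of_smul_mem_submodule M hM ((IsNoetherian.noetherian _).map _) u hstab
    exact (hu (Submodule.mem_one.mpr (IsIntegrallyClosed.isIntegral_iff.mp hint))).elim
  -- some `u * z` with `z ∈ m` is a unit `w`, and then `z' = w⁻¹ (u z') z` for every `z' ∈ m`
  push Not at hstab
  obtain ⟨_, ⟨z, hz, rfl⟩, hzu⟩ := hstab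
  obtain ⟨w, hw⟩ := hmul z hz
  have hw_unit : IsUnit w := by
    by_contra hw_nonunit
    exact hzu ⟨w, (mem_maximalIdeal w).mpr hw_nonunit, hw⟩
  refine ⟨z, le_antisymm (fun z' hz' => ?_) (Ideal.span_le.mpr (by simpa using hz))⟩
  obtain ⟨w', hw'⟩ := hmul z' hz'
  have hzz' : w * z' = w' * z := IsFractionRing.injective R K (by
    simp only [map_mul, hw, hw']; ring)
  refine Ideal.mem_span_singleton'.mpr ⟨hw_unit.unit⁻¹ * w', ?_⟩
  rw [mul_assoc, ← hzz', ← mul_assoc, IsUnit.val_inv_mul, one_mul]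

end IsLocalRing

section Hartogs

open Localization.subalgebra

variable {A K : Type*} [CommRing A] [IsDomain A] [IsNoetherianRing A] [IsIntegrallyClosed A]
  [Field K] [Algebra A K] [IsFractionRing A K]

theorem Ideal.height_le_one_of_le_colon (p : Ideal A) [p.IsPrime] {u : K}
    (hu : u ∉ ofField K p.primeCompl p.primeCompl_le_nonZeroDivisors)
    (hpu : p ≤ (1 : Submodule A K).colon {u}) : p.height ≤ 1 := by
  set B := ofField K p.primeCompl p.primeCompl_le_nonZeroDivisors
  have : IsLocalRing B := IsLocalization.AtPrime.isLocalRing B p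
  have : IsNoetherianRing B := IsLocalization.isNoetherianRing p.primeCompl B inferInstance
  have : IsIntegrallyClosed B :=
    isIntegrallyClosed_of_isLocalization B p.primeCompl p.primeCompl_le_nonZeroDivisors
  rw [← WithBot.coe_le_coe, ← IsLocalization.AtPrime.ringKrullDim_eq_height p B]
  refine IsLocalRing.ringKrullDim_le_one_of_isPrincipal_maximalIdeal
    (IsLocalRing.isPrincipal_maximalIdeal_of_le_colon (u := u) ?_ ?_)
  · intro hu'
    obtain ⟨x, rfl⟩ := Submodule.mem_one.mp hu'
    exact hu x.2
  · rw [← IsLocalization.AtPrime.map_eq_maximalIdeal p B, Ideal.map_le_iff_le_comap]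
    intro r hr
    obtain ⟨a, ha⟩ := Submodule.mem_one.mp (Submodule.mem_colon_singleton.mp (hpu hr))
    refine Submodule.mem_colon_singleton.mpr (Submodule.mem_one.mpr ⟨algebraMap A B a, ?_⟩)
    rw [← IsScalarTower.algebraMap_apply, ha, algebraMap_smul]

variable (A K) in
/-- Algebraic Hartogs. For `s ∉ A`, an associated prime `p = (I : c)` of `A ⧸ I`, with `I` the
ideal of denominators of `s`, yields `u = c s` with `p u ⊆ A` and `u ∉ A_p`. Then `p` has height
`≤ 1`, so `s`, and with it `u`, lies in `A_p`: a contradiction. -/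
theorem IsIntegrallyClosed.iInf_localization_height_le_one_eq_bot :
    ⨅ (p : PrimeSpectrum A) (_ : p.asIdeal.height ≤ 1),
      ofField K p.asIdeal.primeCompl p.asIdeal.primeCompl_le_nonZeroDivisors = ⊥ := by
  refine eq_bot_iff.mpr fun s hs => ?_
  simp only [Algebra.mem_iInf] at hs
  by_contra hsA
  set I := (1 : Submodule A K).colon {s}
  have hI : I ≠ ⊤ := (Ideal.ne_top_iff_one I).mpr fun h1 => hsA <| by
    rwa [Submodule.mem_colon_singleton, one_smul, Submodule.mem_one] at h1
  have : Nontrivial (A ⧸ I) := Ideal.Quotient.nontrivial_iff.mpr hI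
  obtain ⟨p, hp, -⟩ := exists_le_isAssociatedPrime_of_isNoetherianRing A (1 : A ⧸ I) one_ne_zero
  obtain ⟨hp_prime, y, hpy⟩ := isAssociatedPrime_iff.mp hp
  obtain ⟨c, rfl⟩ := Ideal.Quotient.mk_surjective y
  have hmem_p : ∀ r : A, r ∈ p ↔ r • c • s ∈ (1 : Submodule A K) := by
    intro r
    rw [hpy, Submodule.mem_colon_singleton, Submodule.mem_bot, Algebra.smul_def,
      Ideal.Quotient.algebraMap_eq, ← map_mul, Ideal.Quotient.eq_zero_iff_mem,
      Submodule.mem_colon_singleton, mul_smul]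
  have hu : c • s ∉ ofField K p.primeCompl p.primeCompl_le_nonZeroDivisors := by
    rintro ⟨a, t, ht, hcs⟩
    refine ht ((hmem_p t).mpr (Submodule.mem_one.mpr ⟨a, ?_⟩))
    have ht0 : algebraMap A K t ≠ 0 :=
      IsFractionRing.to_map_ne_zero_of_mem_nonZeroDivisors (p.primeCompl_le_nonZeroDivisors ht)
    rw [hcs, Algebra.smul_def, mul_left_comm, mul_inv_cancel₀ ht0, mul_one]
  have hpu : p ≤ (1 : Submodule A K).colon {c • s} := fun r hr =>
    Submodule.mem_colon_singleton.mpr ((hmem_p r).mp hr)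
  exact hu (Subalgebra.smul_mem _ (hs ⟨p, hp_prime⟩ (Ideal.height_le_one_of_le_colon p hu hpu)) c)

end Hartogs

namespace AlgebraicGeometry

namespace IsAffineOpen

variable {Y : Scheme} {W : Y.Opens}

theorem fromSpec_mem (hW : IsAffineOpen W) (p : PrimeSpectrum Γ(Y, W)) : hW.fromSpec p ∈ W :=
  hW.range_fromSpec.le (Set.mem_range_self p)

theorem ringKrullDim_stalk_fromSpec (hW : IsAffineOpen W) (p : PrimeSpectrum Γ(Y, W)) :
    ringKrullDim (Y.presheaf.stalk (hW.fromSpec p)) = p.asIdeal.height := by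
  let _ := TopCat.Presheaf.algebra_section_stalk Y.presheaf ⟨_, hW.fromSpec_mem p⟩
  have : IsLocalization.AtPrime (Y.presheaf.stalk (hW.fromSpec p)) p.asIdeal :=
    hW.isLocalization_stalk' p (hW.fromSpec_mem p)
  exact IsLocalization.AtPrime.ringKrullDim_eq_height p.asIdeal _

variable [IsIntegral Y]

theorem isIntegrallyClosed (hW : IsAffineOpen W) [Nonempty W]
    (hY : ∀ y : Y, IsIntegrallyClosed (Y.presheaf.stalk y)) : IsIntegrallyClosed Γ(Y, W) := by
  refine IsIntegrallyClosed.of_localization_maximal fun P _ _ => ?_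
  let p : PrimeSpectrum Γ(Y, W) := ⟨P, inferInstance⟩
  let _ := TopCat.Presheaf.algebra_section_stalk Y.presheaf ⟨_, hW.fromSpec_mem p⟩
  have : IsLocalization.AtPrime (Y.presheaf.stalk (hW.fromSpec p)) P :=
    hW.isLocalization_stalk' p (hW.fromSpec_mem p)
  exact (hY _).of_equiv (IsLocalization.algEquiv P.primeCompl (Y.presheaf.stalk (hW.fromSpec p))
    (Localization.AtPrime P)).toRingEquiv

open Localization.subalgebra in
theorem algebraMap_mem_ofField (hW : IsAffineOpen W) [Nonempty W]
    [IsFractionRing Γ(Y, W) Y.functionField]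
    (p : PrimeSpectrum Γ(Y, W)) {U : Y.Opens} [Nonempty U] (hU : hW.fromSpec p ∈ U)
    (s : Γ(Y, U)) :
    algebraMap Γ(Y, U) Y.functionField s ∈
      ofField Y.functionField p.asIdeal.primeCompl p.asIdeal.primeCompl_le_nonZeroDivisors := by
  let _ := TopCat.Presheaf.algebra_section_stalk Y.presheaf ⟨_, hW.fromSpec_mem p⟩
  have : IsLocalization.AtPrime (Y.presheaf.stalk (hW.fromSpec p)) p.asIdeal :=
    hW.isLocalization_stalk' p (hW.fromSpec_mem p)
  have : IsScalarTower Γ(Y, W) (Y.presheaf.stalk (hW.fromSpec p)) Y.functionField :=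
    functionField_isScalarTower Y W ⟨_, hW.fromSpec_mem p⟩
  have hlift : IsScalarTower.toAlgHom Γ(Y, W) (Y.presheaf.stalk (hW.fromSpec p)) Y.functionField =
      Localization.mapToFractionRing Y.functionField p.asIdeal.primeCompl _
        p.asIdeal.primeCompl_le_nonZeroDivisors :=
    (IsLocalization.algHom_subsingleton p.asIdeal.primeCompl).elim _ _
  refine (mem_range_mapToFractionRing_iff_ofField _ _ p.asIdeal.primeCompl_le_nonZeroDivisors
    (Y.presheaf.stalk (hW.fromSpec p)) _).mp ⟨Y.presheaf.germ U _ hU s, ?_⟩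
  rw [← hlift]
  exact Y.algebraMap_germ_eq_germToFunctionField hU s

theorem presheaf_map_surjective (hW : IsAffineOpen W)
    (hY : ∀ y : Y, IsIntegrallyClosed (Y.presheaf.stalk y))
    [IsNoetherianRing Γ(Y, W)] {U : Y.Opens} [Nonempty U] (hUW : U ≤ W)
    (hcodim : ∀ y ∈ W, y ∉ U → 2 ≤ ringKrullDim (Y.presheaf.stalk y)) :
    Function.Surjective (Y.presheaf.map (homOfLE hUW).op) := by
  intro s
  have : Nonempty W := ‹Nonempty U›.map fun x => ⟨x.1, hUW x.2⟩
  have := functionField_isFractionRing_of_isAffineOpen Y W hW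
  have := hW.isIntegrallyClosed hY
  have hs : algebraMap Γ(Y, U) Y.functionField s ∈ ⨅ (p : PrimeSpectrum Γ(Y, W))
      (_ : p.asIdeal.height ≤ 1), Localization.subalgebra.ofField Y.functionField
        p.asIdeal.primeCompl p.asIdeal.primeCompl_le_nonZeroDivisors := by
    simp only [Algebra.mem_iInf]
    intro p hp
    refine hW.algebraMap_mem_ofField p ?_ s
    by_contra hpU
    have h2 := hcodim _ (hW.fromSpec_mem p) hpU
    rw [hW.ringKrullDim_stalk_fromSpec] at h2
    have : (2 : WithBot ℕ∞) ≤ 1 := h2.trans (WithBot.coe_le_coe.mpr hp)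
    norm_num at this
  rw [IsIntegrallyClosed.iInf_localization_height_le_one_eq_bot, Algebra.mem_bot] at hs
  obtain ⟨t, ht⟩ := hs
  exact ⟨t, Y.germToFunctionField_injective U
    ((Y.presheaf.germ_res_apply (homOfLE hUW) _ _ t).trans ht)⟩

end IsAffineOpen

namespace Scheme.Hom

variable {X Y : Scheme} (f : X ⟶ Y)

theorem isIso_c_of_isIso_app
    (h : ∀ W : Y.Opens, IsAffineOpen W → Nonempty W → IsIso (f.app W)) : IsIso f.toLRSHom.c := by
  let φ : Y.sheaf ⟶ (TopCat.Sheaf.pushforward CommRingCat f.base).obj X.sheaf := ⟨f.toLRSHom.c⟩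
  have : IsIso φ := TopCat.Sheaf.isIso_iff_isIso_basis
    (B := fun W : {W : Y.Opens // IsAffineOpen W ∧ Nonempty W} => W.1) ?_ fun W => h W.1 W.2.1 W.2.2
  · exact (inferInstance : IsIso ((TopCat.Sheaf.forget _ _).map φ))
  refine Opens.isBasis_iff_nbhd.mpr fun {O x} hx => ?_
  obtain ⟨W, hW, hxW, hWO⟩ := Opens.isBasis_iff_nbhd.mp Y.isBasis_affineOpens hx
  exact ⟨W, ⟨⟨W, hW, ⟨x, hxW⟩⟩, rfl⟩, hxW, hWO⟩

variable {V W : Y.Opens} [IsIso (f ∣_ V)]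

theorem isIso_app_of_le (hWV : W ≤ V) : IsIso (f.app W) := by
  have hV : IsIso (V.ι.app W) := V.ι.isIso_app W (by simpa using hWV)
  have hfV : IsIso ((f ⁻¹ᵁ V).ι.app (f ⁻¹ᵁ W)) :=
    (f ⁻¹ᵁ V).ι.isIso_app _ (by simpa using f.preimage_mono hWV)
  have hres : IsIso ((f ∣_ V).app (V.ι ⁻¹ᵁ W)) := inferInstance
  have h : IsIso ((f ∣_ V ≫ V.ι).app W) := by
    rw [Scheme.Hom.comp_app]; exact IsIso.comp_isIso' hV hres
  rw [morphismRestrict_ι, Scheme.Hom.comp_app] at h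
  exact @IsIso.of_isIso_comp_right _ _ _ _ _ (f.app W) _ hfV h

theorem app_bijective_of_bijective_presheaf_map [IsIntegral X] [Nonempty (W ⊓ V : Y.Opens)]
    (hres : Function.Bijective (Y.presheaf.map (homOfLE (inf_le_left : W ⊓ V ≤ W)).op)) :
    Function.Bijective (f.app W) := by
  obtain ⟨y, hyW, hyV⟩ := ‹Nonempty (W ⊓ V : Y.Opens)›
  obtain ⟨x, hx⟩ := (f ∣_ V).surjective ⟨y, hyV⟩
  have : Nonempty (f ⁻¹ᵁ (W ⊓ V)) := ⟨x.1, by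
    show f x.1 ∈ W ⊓ V
    rw [← morphismRestrict_base_coe, hx]
    exact ⟨hyW, hyV⟩⟩
  have hsq : ⇑(X.presheaf.map (homOfLE (f.preimage_mono inf_le_left)).op) ∘ ⇑(f.app W) =
      ⇑(f.app (W ⊓ V)) ∘ ⇑(Y.presheaf.map (homOfLE (inf_le_left : W ⊓ V ≤ W)).op) := by
    ext s
    exact congr($(f.naturality (homOfLE (inf_le_left : W ⊓ V ≤ W)).op) s).symm
  have happ : Function.Bijective (f.app (W ⊓ V)) :=
    (ConcreteCategory.isIso_iff_bijective _).mp (f.isIso_app_of_le inf_le_right)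
  have hcomp := hsq ▸ happ.comp hres
  have hX : Function.Bijective (X.presheaf.map (homOfLE (f.preimage_mono inf_le_left)).op) :=
    ⟨map_injective_of_isIntegral X _, hcomp.2.of_comp⟩
  exact (hX.of_comp_iff' _).mp hcomp

end Scheme.Hom

end AlgebraicGeometry

theorem stmt_10_general {X Y : Scheme} (f : X ⟶ Y)
    [IsIntegral X] [IsIntegral Y] [IsNoetherian Y]
    (hYnormal : ∀ y : Y, IsIntegrallyClosed (Y.presheaf.stalk y))
    (V : Y.Opens) (hiso : IsIso (f ∣_ V))
    (hY2 : ∀ y : Y, y ∉ V → 2 ≤ ringKrullDim (Y.presheaf.stalk y)) :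
    IsIso f.toLRSHom.c := by
  refine f.isIso_c_of_isIso_app fun W hW hWne => ?_
  have hηW : genericPoint Y ∈ W :=
    ((genericPoint_spec Y).mem_open_set_iff W.2).mpr (by simpa using hWne)
  have hηV : genericPoint Y ∈ V := by
    by_contra hηV
    have h2 := hY2 _ hηV
    rw [ringKrullDim_eq_zero_of_field] at h2
    norm_num at h2
  have : Nonempty (W ⊓ V : Y.Opens) := ⟨⟨_, hηW, hηV⟩⟩
  have : IsNoetherianRing Γ(Y, W) := IsLocallyNoetherian.component_noetherian ⟨W, hW⟩
  refine (ConcreteCategory.isIso_iff_bijective _).mpr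
    (f.app_bijective_of_bijective_presheaf_map (V := V) ⟨map_injective_of_isIntegral Y _, ?_⟩)
  exact hW.presheaf_map_surjective hYnormal inf_le_left
    fun y hyW hy => hY2 y fun hyV => hy ⟨hyW, hyV⟩

/-- Corollary 3.9 of the paper for schemes: let `f : X → Y` be a morphism of integral
normal Noetherian `k`-schemes which restricts to an isomorphism `f⁻¹(V) → V` over an open
`V ⊆ Y`, such that the complements of `f⁻¹(V)` and `V` have codimension at least 2 (all
points outside have local ring of Krull dimension `≥ 2`).  Then `f` is Stein:
the natural map `𝒪_Y → f_* 𝒪_X` is an isomorphism. -/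
theorem stmt_10 {k : Type} [Field k] {X Y : Scheme} (f : X ⟶ Y)
    (sX : X ⟶ Spec (CommRingCat.of k)) (sY : Y ⟶ Spec (CommRingCat.of k))
    (hcomm : f ≫ sY = sX)
    [IsIntegral X] [IsIntegral Y] [IsNoetherian X] [IsNoetherian Y]
    (hXnormal : ∀ x : X, IsIntegrallyClosed (X.presheaf.stalk x))
    (hYnormal : ∀ y : Y, IsIntegrallyClosed (Y.presheaf.stalk y))
    (V : Y.Opens) (hiso : IsIso (f ∣_ V))
    (hX2 : ∀ x : X, x ∉ f ⁻¹ᵁ V → 2 ≤ ringKrullDim (X.presheaf.stalk x))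
    (hY2 : ∀ y : Y, y ∉ V → 2 ≤ ringKrullDim (Y.presheaf.stalk y)) :
    IsIso f.toLRSHom.c :=
  stmt_10_general f hYnormal V hiso hY2
end
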